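/- arXiv:2512.07343 — 4 statements merged into one kernel-verified Lean document; each statement's English description precedes it below -/
import Mathlib

section
/- Let q be a prime power, m ≥ 2, and P, Q nonempty subsets of {1,...,m}. Define M̂ = {(e,f) ∈ F_q^m × F_q^m : supp(f) ∩ P ≠ ∅, supp(e) ∩ P ≠ ∅, supp(e) ∩ Q = ∅, supp(e+f) ∩ P = ∅}. Then |M̂| = (q^{|P|−|P∩Q|} − 1)·q^{2m−|P|−|P∪Q|}. -/
theorem stmt3 (q m : ℕ) (hq : IsPrimePow q) (hm : 2 ≤ m)
    (F : Type) [Field F] [Fintype F] (hF : Fintype.card F = q)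
    (P Q : Finset (Fin m)) (hP : P.Nonempty) (hQ : Q.Nonempty) :
    Nat.card {x : (Fin m → F) × (Fin m → F) |
        (∃ i ∈ P, x.2 i ≠ 0) ∧ (∃ i ∈ P, x.1 i ≠ 0) ∧ (∀ i ∈ Q, x.1 i = 0) ∧
        (∀ i ∈ P, x.1 i + x.2 i = 0)}
      = (q ^ (P.card - (P ∩ Q).card) - 1) * q ^ (2 * m - P.card - (P ∪ Q).card) := by
  classical
  set S : Set ((Fin m → F) × (Fin m → F)) := {x |
        (∃ i ∈ P, x.2 i ≠ 0) ∧ (∃ i ∈ P, x.1 i ≠ 0) ∧ (∀ i ∈ Q, x.1 i = 0) ∧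
        (∀ i ∈ P, x.1 i + x.2 i = 0)} with hS
  have e : S ≃ {a : ↥(P \ Q) → F // a ≠ 0} × ((↥((P ∪ Q)ᶜ) → F)) × (↥(Pᶜ) → F) := by
    refine
      { toFun := fun x => ⟨⟨fun i => x.1.1 i.1, ?_⟩, fun i => x.1.1 i.1, fun i => x.1.2 i.1⟩
        invFun := fun y =>
          ⟨(fun i => if h : i ∈ P \ Q then y.1.1 ⟨i, h⟩ else
              if h : i ∈ (P ∪ Q)ᶜ then y.2.1 ⟨i, h⟩ else 0,
            fun i => if h : i ∈ P then
              - (if h' : i ∈ P \ Q then y.1.1 ⟨i, h'⟩ else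
                  if h' : i ∈ (P ∪ Q)ᶜ then y.2.1 ⟨i, h'⟩ else 0)
              else y.2.2 ⟨i, Finset.mem_compl.2 h⟩), ?_⟩
        left_inv := ?_
        right_inv := ?_ }
    · obtain ⟨_, ⟨i, hiP, hi⟩, hQ0, _⟩ := x.2
      have hiQ : i ∉ Q := fun h => hi (hQ0 i h)
      intro h
      exact hi (congrFun h ⟨i, Finset.mem_sdiff.2 ⟨hiP, hiQ⟩⟩)
    · obtain ⟨j, hj⟩ := Function.ne_iff.1 y.1.2
      have hjP : j.1 ∈ P := (Finset.mem_sdiff.1 j.2).1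
      have he : (if h : j.1 ∈ P \ Q then y.1.1 ⟨j.1, h⟩ else
          if h : j.1 ∈ (P ∪ Q)ᶜ then y.2.1 ⟨j.1, h⟩ else 0) = y.1.1 j := by
        rw [dif_pos j.2]
      refine ⟨⟨j.1, hjP, ?_⟩, ⟨j.1, hjP, ?_⟩, ?_, ?_⟩
      · dsimp only
        rw [dif_pos hjP, he]
        simpa using hj
      · dsimp only
        rw [he]
        simpa using hj
      · intro i hiQ
        dsimp only
        have h1 : i ∉ P \ Q := fun h => (Finset.mem_sdiff.1 h).2 hiQ
        have h2 : i ∉ (P ∪ Q)ᶜ := fun h =>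
          (Finset.mem_compl.1 h) (Finset.mem_union_right _ hiQ)
        rw [dif_neg h1, dif_neg h2]
      · intro i hiP
        dsimp only
        rw [dif_pos hiP]
        ring
    · rintro ⟨⟨e, f⟩, hx⟩
      obtain ⟨_, _, hQ0, hsum⟩ := hx
      refine Subtype.ext (Prod.ext ?_ ?_) <;> funext i <;> simp only
      · by_cases h1 : i ∈ P \ Q
        · rw [dif_pos h1]
        · rw [dif_neg h1]
          by_cases h2 : i ∈ (P ∪ Q)ᶜ
          · rw [dif_pos h2]
          · rw [dif_neg h2]
            have h2' : i ∉ P → i ∈ Q := by simpa using h2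
            have hiQ : i ∈ Q := by
              by_cases hp : i ∈ P
              · by_contra hq'
                exact h1 (Finset.mem_sdiff.2 ⟨hp, hq'⟩)
              · exact h2' hp
            exact (hQ0 i hiQ).symm
      · by_cases hiP : i ∈ P
        · rw [dif_pos hiP]
          have hfe : f i = - e i := by linear_combination hsum i hiP
          rw [hfe]
          congr 1
          by_cases h1 : i ∈ P \ Q
          · rw [dif_pos h1]
          · rw [dif_neg h1]
            have h2 : i ∉ (P ∪ Q)ᶜ := fun h =>
              (Finset.mem_compl.1 h) (Finset.mem_union_left _ hiP)
            rw [dif_neg h2]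
            have hiQ : i ∈ Q := by
              by_contra hq'
              exact h1 (Finset.mem_sdiff.2 ⟨hiP, hq'⟩)
            exact (hQ0 i hiQ).symm
        · rw [dif_neg hiP]
    · rintro ⟨a, b, c⟩
      refine Prod.ext (Subtype.ext ?_) (Prod.ext ?_ ?_) <;> funext j <;> simp only
      · rw [dif_pos j.2]
      · have h1 : j.1 ∉ P \ Q := fun h => (Finset.mem_compl.1 j.2)
          (Finset.mem_union_left _ (Finset.mem_sdiff.1 h).1)
        rw [dif_neg h1, dif_pos j.2]
      · rw [dif_neg (Finset.mem_compl.1 j.2)]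
  have hPc : P.card ≤ m := by simpa using Finset.card_le_card (Finset.subset_univ P)
  have hPQc : (P ∪ Q).card ≤ m := by
    simpa using Finset.card_le_card (Finset.subset_univ (P ∪ Q))
  have hsd : (P \ Q).card = P.card - (P ∩ Q).card := by
    rw [← Finset.sdiff_inter_self_left P Q, Finset.card_sdiff_of_subset Finset.inter_subset_left]
  have h1 : Nat.card {a : ↥(P \ Q) → F // a ≠ 0} = q ^ (P.card - (P ∩ Q).card) - 1 := by
    rw [Nat.card_eq_fintype_card]
    simp only [ne_eq]
    rw [Fintype.card_subtype_compl, Fintype.card_subtype_eq, Fintype.card_fun, hF,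
      Fintype.card_coe, hsd]
  have h2 : Nat.card (↥((P ∪ Q)ᶜ) → F) = q ^ (m - (P ∪ Q).card) := by
    rw [Nat.card_eq_fintype_card, Fintype.card_fun, hF, Fintype.card_coe,
      Finset.card_compl, Fintype.card_fin]
  have h3 : Nat.card (↥(Pᶜ) → F) = q ^ (m - P.card) := by
    rw [Nat.card_eq_fintype_card, Fintype.card_fun, hF, Fintype.card_coe,
      Finset.card_compl, Fintype.card_fin]
  rw [Nat.card_congr e, Nat.card_prod, Nat.card_prod, h1, h2, h3, ← pow_add]
  congr 2
  omega
end

section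
/- Let q be a prime power, m ≥ 2, and P, Q nonempty subsets of {1,...,m}. Define N̂ = {(e,f) ∈ F_q^m × F_q^m : supp(f) ∩ P ≠ ∅, supp(e) ∩ P ≠ ∅, supp(e) ∩ Q ≠ ∅, supp(e+f) ∩ P = ∅}. Then |N̂| = q^{m−|P|}·(q^m − q^{m−|P|} − q^{m−|Q|} + q^{m−|P∪Q|}). -/
open Finset

section aux
variable {m q : ℕ} {F : Type} [Field F] [Fintype F] [DecidableEq F]

lemma count_zero (hF : Fintype.card F = q) (A : Finset (Fin m)) :
    (Finset.univ.filter (fun e : Fin m → F => ∀ i ∈ A, e i = 0)).card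
      = q ^ (m - A.card) := by
  have e : {e : Fin m → F // ∀ i ∈ A, e i = 0} ≃ ((Aᶜ : Finset (Fin m)) → F) :=
    { toFun := fun e i => e.1 i.1
      invFun := fun g => ⟨fun i => if h : i ∈ Aᶜ then g ⟨i, h⟩ else 0, by
        intro i hi
        simp [Finset.mem_compl, hi]⟩
      left_inv := by
        rintro ⟨e, he⟩
        ext i
        by_cases h : i ∈ Aᶜ
        · simp [h]
        · simp only [h, dif_neg, not_false_iff]
          exact (he i (by simpa [Finset.mem_compl] using h)).symm
      right_inv := by
        intro g
        funext i
        simp [i.2] }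
  rw [← Fintype.card_subtype]
  rw [Fintype.card_congr e, Fintype.card_fun, hF]
  congr 1
  rw [Fintype.card_coe, Finset.card_compl, Fintype.card_fin]

end aux

theorem stmt5 (q m : ℕ) (hq : IsPrimePow q) (hm : 2 ≤ m)
    (F : Type) [Field F] [Fintype F] (hF : Fintype.card F = q)
    (P Q : Finset (Fin m)) (hP : P.Nonempty) (hQ : Q.Nonempty) :
    Nat.card {x : (Fin m → F) × (Fin m → F) |
        (∃ i ∈ P, x.2 i ≠ 0) ∧ (∃ i ∈ P, x.1 i ≠ 0) ∧ (∃ i ∈ Q, x.1 i ≠ 0) ∧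
        (∀ i ∈ P, x.1 i + x.2 i = 0)}
      = q ^ (m - P.card) *
          (q ^ m - q ^ (m - P.card) - q ^ (m - Q.card) + q ^ (m - (P ∪ Q).card)) := by
  classical
  -- Equiv to (S × g) where S = good e's, g = values of f outside P
  have E : {x : (Fin m → F) × (Fin m → F) //
        (∃ i ∈ P, x.2 i ≠ 0) ∧ (∃ i ∈ P, x.1 i ≠ 0) ∧ (∃ i ∈ Q, x.1 i ≠ 0) ∧
        (∀ i ∈ P, x.1 i + x.2 i = 0)}
      ≃ {e : Fin m → F // (∃ i ∈ P, e i ≠ 0) ∧ (∃ i ∈ Q, e i ≠ 0)} × ((Pᶜ : Finset (Fin m)) → F) :=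
    { toFun := fun x => (⟨x.1.1, x.2.2.1, x.2.2.2.1⟩, fun i => x.1.2 i.1)
      invFun := fun p =>
        ⟨(p.1.1, fun i => if h : i ∈ P then -p.1.1 i else p.2 ⟨i, by simpa using h⟩), by
          obtain ⟨⟨e, ⟨i, hiP, hie⟩, hQ'⟩, g⟩ := p
          refine ⟨⟨i, hiP, by simp [hiP, hie]⟩, ⟨i, hiP, hie⟩, hQ', ?_⟩
          intro j hj
          simp [hj]⟩
      left_inv := by
        rintro ⟨⟨e, f⟩, h1, h2, h3, h4⟩
        ext i
        · rfl
        · dsimp only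
          by_cases h : i ∈ P
          · simp only [h, dif_pos]
            have := h4 i h
            linear_combination -this
          · simp [h]
      right_inv := by
        rintro ⟨⟨e, he⟩, g⟩
        refine Prod.ext rfl ?_
        funext i
        have : (i : Fin m) ∉ P := Finset.mem_compl.mp i.2
        simp [this] }
  rw [Set.coe_setOf, Nat.card_congr E, Nat.card_prod]
  have hcompl : Nat.card ((Pᶜ : Finset (Fin m)) → F) = q ^ (m - P.card) := by
    rw [Nat.card_eq_fintype_card, Fintype.card_fun, hF, Fintype.card_coe,
      Finset.card_compl, Fintype.card_fin]
  rw [hcompl]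
  clear E
  -- count S
  have hq2 : 2 ≤ q := hq.two_le
  have hScard : Nat.card {e : Fin m → F // (∃ i ∈ P, e i ≠ 0) ∧ (∃ i ∈ Q, e i ≠ 0)}
      = q ^ m - q ^ (m - P.card) - q ^ (m - Q.card) + q ^ (m - (P ∪ Q).card) := by
    have key : (Finset.univ.filter
        (fun e : Fin m → F => (∃ i ∈ P, e i ≠ 0) ∧ (∃ i ∈ Q, e i ≠ 0))).card
        + (Finset.univ.filter
        (fun e : Fin m → F => ¬((∃ i ∈ P, e i ≠ 0) ∧ (∃ i ∈ Q, e i ≠ 0)))).card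
        = q ^ m := by
      rw [Finset.card_filter_add_card_filter_not, Finset.card_univ,
        Fintype.card_fun, hF, Fintype.card_fin]
    have hneg : (Finset.univ.filter
        (fun e : Fin m → F => ¬((∃ i ∈ P, e i ≠ 0) ∧ (∃ i ∈ Q, e i ≠ 0)))).card
        = q ^ (m - P.card) + q ^ (m - Q.card) - q ^ (m - (P ∪ Q).card) := by
      have heq : Finset.univ.filter
          (fun e : Fin m → F => ¬((∃ i ∈ P, e i ≠ 0) ∧ (∃ i ∈ Q, e i ≠ 0)))
          = Finset.univ.filter
          (fun e : Fin m → F => (∀ i ∈ P, e i = 0) ∨ (∀ i ∈ Q, e i = 0)) := by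
        apply Finset.filter_congr
        intro e _
        simp only [not_and_or]
        push_neg
        rfl
      rw [heq, Finset.filter_or, Finset.card_union, ← Finset.filter_and]
      have hand : Finset.univ.filter
          (fun e : Fin m → F => (∀ i ∈ P, e i = 0) ∧ (∀ i ∈ Q, e i = 0))
          = Finset.univ.filter (fun e : Fin m → F => ∀ i ∈ P ∪ Q, e i = 0) := by
        apply Finset.filter_congr
        intro e _
        simp only [Finset.mem_union, eq_iff_iff]
        constructor
        · rintro ⟨h1, h2⟩ i (h | h)
          exacts [h1 i h, h2 i h]
        · intro h
          exact ⟨fun i hi => h i (Or.inl hi), fun i hi => h i (Or.inr hi)⟩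
      rw [count_zero hF, count_zero hF, hand, count_zero hF]
    have hSfilter : Nat.card {e : Fin m → F // (∃ i ∈ P, e i ≠ 0) ∧ (∃ i ∈ Q, e i ≠ 0)} = (Finset.univ.filter
        (fun e : Fin m → F => (∃ i ∈ P, e i ≠ 0) ∧ (∃ i ∈ Q, e i ≠ 0))).card := by
      rw [Nat.card_eq_fintype_card, Fintype.card_subtype]
    rw [hSfilter, Nat.eq_sub_of_add_eq key, hneg]
    clear key hneg hSfilter
    -- inequalities for omega
    have hc : q ^ (m - (P ∪ Q).card) ≤ q ^ (m - Q.card) := by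
      apply Nat.pow_le_pow_right (by omega)
      have : Q.card ≤ (P ∪ Q).card :=
        Finset.card_le_card Finset.subset_union_right
      omega
    have haP : q ^ (m - P.card) ≤ q ^ (m - 1) := by
      apply Nat.pow_le_pow_right (by omega)
      have := Finset.card_pos.mpr hP
      omega
    have haQ : q ^ (m - Q.card) ≤ q ^ (m - 1) := by
      apply Nat.pow_le_pow_right (by omega)
      have := Finset.card_pos.mpr hQ
      omega
    have h2q : 2 * q ^ (m - 1) ≤ q ^ m := by
      calc 2 * q ^ (m - 1) ≤ q * q ^ (m - 1) := by
            exact Nat.mul_le_mul_right _ hq2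
        _ = q ^ m := by
            rw [← pow_succ']
            congr 1
            omega
    omega
  rw [hScard, Nat.mul_comm]
end

section
/- Let C be a linear code over F_q, and let w_0 and w_∞ be the minimum and maximum Hamming weights among nonzero codewords of C. If w_0/w_∞ > (q−1)/q, then C is minimal; i.e., for any codewords c, c' ∈ C with supp(c') ⊆ supp(c) and c ≠ 0, there exists α ∈ F_q with c' = α·c. -/
/-!
Averaging over the line `a ↦ c' - a • c`: at a coordinate in the support of `c` exactly one
scalar `a` kills `c' - a • c`, and outside it every `a` does, so the weights of the `q` codewords
`c' - a • c` sum to `(q - 1) · wt(c)`. If `c'` is not a multiple of `c`, none of them is zero, so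
`q · w₀ ≤ (q - 1) · wt(c) ≤ (q - 1) · w₁`.
-/

open Finset

theorem card_filter_sub_mul_ne_zero {F : Type*} [Field F] [Fintype F] [DecidableEq F]
    {x : F} (hx : x ≠ 0) (y : F) :
    #{a : F | y - a * x ≠ 0} = Fintype.card F - 1 := by
  have : ∀ a : F, y - a * x ≠ 0 ↔ a ≠ y / x := fun a => by
    rw [ne_eq, ne_eq, sub_eq_zero, eq_div_iff hx, eq_comm]
  simp_rw [this, filter_ne', card_erase_of_mem (mem_univ _), card_univ]

theorem sum_hammingNorm_sub_smul {ι F : Type*} [Fintype ι] [Field F] [Fintype F]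
    [DecidableEq F] {c c' : ι → F} (hsupp : ∀ i, c' i ≠ 0 → c i ≠ 0) :
    ∑ a : F, hammingNorm (c' - a • c) = (Fintype.card F - 1) * hammingNorm c := by
  have hcoord : ∀ i, #{a : F | c' i - a * c i ≠ 0} =
      if c i ≠ 0 then Fintype.card F - 1 else 0 := fun i => by
    by_cases hci : c i = 0
    · have hc'i : c' i = 0 := not_imp_not.1 (hsupp i) hci
      simp [hci, hc'i]
    · rw [if_pos hci, card_filter_sub_mul_ne_zero hci]
  calc ∑ a : F, hammingNorm (c' - a • c)
      = ∑ a : F, ∑ i, if c' i - a * c i ≠ 0 then 1 else 0 := by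
        simp [hammingNorm, card_filter]
    _ = ∑ i, #{a : F | c' i - a * c i ≠ 0} := by
        rw [sum_comm]; simp only [card_filter]
    _ = (Fintype.card F - 1) * hammingNorm c := by
        simp_rw [hcoord, ← sum_filter, sum_const, smul_eq_mul, mul_comm, hammingNorm]

theorem stmt13_general (q n w₀ w₁ : ℕ)
    (F : Type) [Field F] [Fintype F] [DecidableEq F] (hF : Fintype.card F = q)
    (C : Submodule F (Fin n → F))
    (hmin : IsLeast {w : ℕ | ∃ c ∈ C, c ≠ 0 ∧ hammingNorm c = w} w₀)
    (hmax : IsGreatest {w : ℕ | ∃ c ∈ C, c ≠ 0 ∧ hammingNorm c = w} w₁)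
    (hab : (q - 1) * w₁ < q * w₀) :
    ∀ c ∈ C, ∀ c' ∈ C, c ≠ 0 → (∀ i, c' i ≠ 0 → c i ≠ 0) →
      ∃ α : F, c' = α • c := by
  intro c hc c' hc' hc0 hsupp
  by_contra! hcon
  have hw₀ : ∀ a : F, w₀ ≤ hammingNorm (c' - a • c) := fun a =>
    hmin.2 ⟨_, C.sub_mem hc' (C.smul_mem a hc), sub_ne_zero.2 (hcon a), rfl⟩
  have hw₁ : hammingNorm c ≤ w₁ := hmax.2 ⟨c, hc, hc0, rfl⟩
  have : q * w₀ ≤ (q - 1) * w₁ :=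
    calc q * w₀ = ∑ _a : F, w₀ := by simp [hF]
      _ ≤ ∑ a : F, hammingNorm (c' - a • c) := sum_le_sum fun a _ => hw₀ a
      _ = (q - 1) * hammingNorm c := by rw [sum_hammingNorm_sub_smul hsupp, hF]
      _ ≤ (q - 1) * w₁ := Nat.mul_le_mul_left _ hw₁
  omega

theorem stmt13 (q n w₀ w₁ : ℕ) (hq : IsPrimePow q)
    (F : Type) [Field F] [Fintype F] [DecidableEq F] (hF : Fintype.card F = q)
    (C : Submodule F (Fin n → F))
    (hmin : IsLeast {w : ℕ | ∃ c ∈ C, c ≠ 0 ∧ hammingNorm c = w} w₀)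
    (hmax : IsGreatest {w : ℕ | ∃ c ∈ C, c ≠ 0 ∧ hammingNorm c = w} w₁)
    (hab : (q - 1) * w₁ < q * w₀) :
    ∀ c ∈ C, ∀ c' ∈ C, c ≠ 0 → (∀ i, c' i ≠ 0 → c i ≠ 0) →
      ∃ α : F, c' = α • c :=
  stmt13_general q n w₀ w₁ F hF C hmin hmax hab
end

section
/- Let q be a prime power, m ≥ 2, and let A ⊆ {1,...,m} be a nonempty proper subset with Δ_A = {v ∈ F_q^m : supp(v) ⊆ A}. If q ≥ 3, or if q = 2 and |{1,...,m} \ A| ≥ 2, then for every v ∈ F_q^m \ Δ_A there exist linearly independent vectors e, f ∈ F_q^m \ Δ_A with v = e + f. -/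
/-!
Pick a coordinate `j ∉ A` with `v j ≠ 0` and split `v = e + f` with `f = s • v + Pi.single k 1`
for some `k ≠ j`. Then `e = v - f` and `f` have the nonzero `2 × 2` minor `v j` on the coordinates
`j, k`, so they are independent. If some `k ≠ j` lies outside `A`, take `s = 0`: then `e j = v j`
and `f k = 1`. Otherwise `Aᶜ = {j}`, so `q ≥ 3` and we may take `s ∉ {0, 1}`: then
`e j = (1 - s) v j` and `f j = s v j` are both nonzero.
-/

theorem LinearIndependent.pair_of_mul_sub_mul_ne_zero {ι R : Type*} [CommRing R]
    [NoZeroDivisors R] {e f : ι → R} {i k : ι} (h : e i * f k - e k * f i ≠ 0) :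
    LinearIndependent R ![e, f] := by
  rw [LinearIndependent.pair_iff]
  intro s t hst
  have hi : s * e i + t * f i = 0 := by simpa using congrFun hst i
  have hk : s * e k + t * f k = 0 := by simpa using congrFun hst k
  constructor
  · refine (mul_eq_zero.mp ?_).resolve_right h
    linear_combination f k * hi - f i * hk
  · refine (mul_eq_zero.mp ?_).resolve_right h
    linear_combination e i * hk - e k * hi

theorem linearIndependent_sub_smul_add_single_one {ι K : Type*} [Field K] [DecidableEq ι]
    {v : ι → K} {j k : ι} (hvj : v j ≠ 0) (hkj : k ≠ j) (s : K) :
    LinearIndependent K ![v - (s • v + Pi.single k 1), s • v + Pi.single k 1] := by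
  apply LinearIndependent.pair_of_mul_sub_mul_ne_zero (i := j) (k := k)
  simp only [Pi.sub_apply, Pi.add_apply, Pi.smul_apply, smul_eq_mul, Pi.single_eq_same,
    Pi.single_eq_of_ne hkj.symm]
  convert hvj using 1
  ring

theorem exists_linearIndependent_add_eq_of_notMem {ι K : Type*} [Field K] [DecidableEq ι]
    {A : Finset ι} {v : ι → K} {j k : ι} (hvj : v j ≠ 0) (hjA : j ∉ A) (hkj : k ≠ j) {s : K}
    (hs : s ≠ 1) (hf : ¬ ∀ i, (s • v + Pi.single k 1 : ι → K) i ≠ 0 → i ∈ A) :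
    ∃ e f : ι → K,
      (¬ ∀ i, e i ≠ 0 → i ∈ A) ∧ (¬ ∀ i, f i ≠ 0 → i ∈ A) ∧
      v = e + f ∧ LinearIndependent K ![e, f] := by
  refine ⟨_, _, fun h => hjA (h j ?_), hf, (sub_add_cancel _ _).symm,
    linearIndependent_sub_smul_add_single_one hvj hkj s⟩
  simpa [Pi.single_eq_of_ne hkj.symm, ← one_sub_mul, sub_eq_zero, hvj] using hs.symm

theorem stmt15_general (q m : ℕ) (hm : 2 ≤ m)
    (F : Type) [Field F] [Fintype F] (hF : Fintype.card F = q)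
    (A : Finset (Fin m))
    (hcase : 3 ≤ q ∨ (q = 2 ∧ 2 ≤ Aᶜ.card))
    (v : Fin m → F) (hv : ¬ ∀ i, v i ≠ 0 → i ∈ A) :
    ∃ e f : Fin m → F,
      (¬ ∀ i, e i ≠ 0 → i ∈ A) ∧ (¬ ∀ i, f i ≠ 0 → i ∈ A) ∧
      v = e + f ∧ LinearIndependent F ![e, f] := by
  classical
  push Not at hv
  obtain ⟨j, hvj, hjA⟩ := hv
  by_cases hk : ∃ k ∉ A, k ≠ j
  · obtain ⟨k, hkA, hkj⟩ := hk
    exact exists_linearIndependent_add_eq_of_notMem hvj hjA hkj zero_ne_one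
      fun h => hkA (h k (by simp))
  · push Not at hk
    have hq : 3 ≤ q := by
      have : Aᶜ.card ≤ 1 := Finset.card_le_one.mpr fun a ha b hb => by
        rw [hk a (Finset.mem_compl.mp ha), hk b (Finset.mem_compl.mp hb)]
      omega
    obtain ⟨s, hs0, hs1⟩ := ENat.exists_ne_ne_of_three_le (α := F) (by simp [hF, hq]) 0 1
    have : Nontrivial (Fin m) := Fin.nontrivial_iff_two_le.mpr hm
    obtain ⟨k, hkj⟩ := exists_ne j
    exact exists_linearIndependent_add_eq_of_notMem hvj hjA hkj hs1
      fun h => hjA (h j (by simp [Pi.single_eq_of_ne hkj.symm, hs0, hvj]))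

theorem stmt15 (q m : ℕ) (hq : IsPrimePow q) (hm : 2 ≤ m)
    (F : Type) [Field F] [Fintype F] (hF : Fintype.card F = q)
    (A : Finset (Fin m)) (hA : A.Nonempty) (hA' : A ≠ Finset.univ)
    (hcase : 3 ≤ q ∨ (q = 2 ∧ 2 ≤ Aᶜ.card))
    (v : Fin m → F) (hv : ¬ ∀ i, v i ≠ 0 → i ∈ A) :
    ∃ e f : Fin m → F,
      (¬ ∀ i, e i ≠ 0 → i ∈ A) ∧ (¬ ∀ i, f i ≠ 0 → i ∈ A) ∧
      v = e + f ∧ LinearIndependent F ![e, f] :=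
  stmt15_general q m hm F hF A hcase v hv
end
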